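/- Suppose the sequence (x^k, y^k) is generated by N-PDHG1, i.e., x^{k+1} ∈ X minimizes x ↦ Φ(x, y^k) + (1/2)⟨x − x^k, (rAᵀA + Q)(x − x^k)⟩ over X, and y^{k+1} ∈ Y maximizes y ↦ Φ(2x^{k+1} − x^k, y) − (1/(2r))‖y − y^k‖² over Y. Then for every k, u^{k+1} = (x^{k+1}, y^{k+1}) ∈ M and for all u = (x, y) ∈ M: θ(u) − θ(u^{k+1}) + ⟨u − u^{k+1}, M̂u⟩ ≥ ⟨u − u^{k+1}, H(u^k − u^{k+1})⟩. -/

import Mathlib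

open Matrix

noncomputable section

/-- The saddle function `Φ(x, y) = θ₁(x) − ⟨y, Ax⟩ − θ₂(y)`. -/
def Phi {n m : ℕ} (θ1 : (Fin n → ℝ) → ℝ) (θ2 : (Fin m → ℝ) → ℝ)
    (A : Matrix (Fin m) (Fin n) ℝ) (x : Fin n → ℝ) (y : Fin m → ℝ) : ℝ :=
  θ1 x - y ⬝ᵥ (A *ᵥ x) - θ2 y

/-- The bilinear form `(u₁, u₂) ↦ ⟨u₁, H u₂⟩` of `H = [[rAᵀA + Q, Aᵀ], [A, (1/r)I]]`. -/
def Hbil {n m : ℕ} (A : Matrix (Fin m) (Fin n) ℝ) (Q : Matrix (Fin n) (Fin n) ℝ) (r : ℝ)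
    (u₁ u₂ : (Fin n → ℝ) × (Fin m → ℝ)) : ℝ :=
  u₁.1 ⬝ᵥ ((r • (Aᵀ * A) + Q) *ᵥ u₂.1) + u₁.1 ⬝ᵥ (Aᵀ *ᵥ u₂.2) + u₁.2 ⬝ᵥ (A *ᵥ u₂.1)
    + 1 / r * (u₁.2 ⬝ᵥ u₂.2)

/-- The squared `H`-weighted norm `‖u‖²_H = ⟨u, Hu⟩`. -/
def HnormSq {n m : ℕ} (A : Matrix (Fin m) (Fin n) ℝ) (Q : Matrix (Fin n) (Fin n) ℝ) (r : ℝ)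
    (u : (Fin n → ℝ) × (Fin m → ℝ)) : ℝ := Hbil A Q r u u

/-- `⟨u − u', M̂v⟩` where `M̂ = [[0, −Aᵀ], [A, 0]]`, i.e. `M̂(x, y) = (−Aᵀy, Ax)`. -/
def Mhat {n m : ℕ} (A : Matrix (Fin m) (Fin n) ℝ)
    (u : (Fin n → ℝ) × (Fin m → ℝ)) : (Fin n → ℝ) × (Fin m → ℝ) :=
  (-(Aᵀ *ᵥ u.2), A *ᵥ u.1)

/-- The Euclidean inner product on `ℝⁿ × ℝᵐ`. -/
def pdot {n m : ℕ} (u₁ u₂ : (Fin n → ℝ) × (Fin m → ℝ)) : ℝ := u₁.1 ⬝ᵥ u₂.1 + u₁.2 ⬝ᵥ u₂.2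

/-- The N-PDHG1 iteration: `x^{k+1} ∈ X` minimizes
`x ↦ Φ(x, yᵏ) + (1/2)⟨x − xᵏ, (rAᵀA + Q)(x − xᵏ)⟩` over `X`, and `y^{k+1} ∈ Y` maximizes
`y ↦ Φ(2x^{k+1} − xᵏ, y) − (1/(2r))‖y − yᵏ‖²` over `Y`. -/
def NPDHG1 {n m : ℕ} (θ1 : (Fin n → ℝ) → ℝ) (θ2 : (Fin m → ℝ) → ℝ)
    (X : Set (Fin n → ℝ)) (Y : Set (Fin m → ℝ)) (A : Matrix (Fin m) (Fin n) ℝ)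
    (r : ℝ) (Q : Matrix (Fin n) (Fin n) ℝ)
    (x : ℕ → Fin n → ℝ) (y : ℕ → Fin m → ℝ) : Prop :=
  (∀ k : ℕ, x (k + 1) ∈ X ∧ ∀ z ∈ X,
      Phi θ1 θ2 A (x (k + 1)) (y k)
          + 1 / 2 * ((x (k + 1) - x k) ⬝ᵥ ((r • (Aᵀ * A) + Q) *ᵥ (x (k + 1) - x k)))
        ≤ Phi θ1 θ2 A z (y k)
          + 1 / 2 * ((z - x k) ⬝ᵥ ((r • (Aᵀ * A) + Q) *ᵥ (z - x k)))) ∧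
  (∀ k : ℕ, y (k + 1) ∈ Y ∧ ∀ z ∈ Y,
      Phi θ1 θ2 A ((2 : ℝ) • x (k + 1) - x k) z - 1 / (2 * r) * ((z - y k) ⬝ᵥ (z - y k))
        ≤ Phi θ1 θ2 A ((2 : ℝ) • x (k + 1) - x k) (y (k + 1))
          - 1 / (2 * r) * ((y (k + 1) - y k) ⬝ᵥ (y (k + 1) - y k)))

/-!
Each half-step of N-PDHG1 minimizes a convex function plus a quadratic proximal term, so moving
from the minimizer a short way towards any feasible point and letting the step length tend to `0`
yields the first-order variational inequality `f z - f x⁺ + ⟨z - x⁺, G (x⁺ - x)⟩ ≥ 0`.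
Adding the primal and dual inequalities, the coupling terms `⟨y, A x⟩` regroup exactly into
`⟨u - uᵏ⁺¹, M̂ u⟩ - ⟨u - uᵏ⁺¹, H (uᵏ - uᵏ⁺¹)⟩`: the extrapolated point `2xᵏ⁺¹ - xᵏ` of the dual
step is what produces the off-diagonal blocks of `H`.
-/

lemma nonneg_of_forall_add_mul_nonneg {c e : ℝ} (h : ∀ t : ℝ, 0 < t → t ≤ 1 → 0 ≤ c + t * e) :
    0 ≤ c := by
  have hlim : Filter.Tendsto (fun t : ℝ => c + t * e) (nhdsWithin 0 (Set.Ioi 0)) (nhds c) := by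
    have hcont : Continuous fun t : ℝ => c + t * e := by fun_prop
    exact (hcont.tendsto' 0 c (by simp)).mono_left nhdsWithin_le_nhds
  refine ge_of_tendsto hlim ?_
  filter_upwards [Ioc_mem_nhdsGT one_pos] with t ht using h t ht.1 ht.2

theorem ConvexOn.nonneg_of_isMinOn_add_bilin {E : Type*} [AddCommGroup E] [Module ℝ E]
    {s : Set E} {f : E → ℝ} (hf : ConvexOn ℝ s f) {B : LinearMap.BilinForm ℝ E} (hB : B.IsSymm)
    {x₀ x : E} (hx : x ∈ s) (hmin : IsMinOn (fun z => f z + B (z - x₀) (z - x₀) / 2) s x)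
    {z : E} (hz : z ∈ s) : 0 ≤ f z - f x + B (z - x) (x - x₀) := by
  refine nonneg_of_forall_add_mul_nonneg (e := B (z - x) (z - x) / 2) fun t ht₀ ht₁ => ?_
  have hseg : x + t • (z - x) = (1 - t) • x + t • z := by module
  have hmem : x + t • (z - x) ∈ s := hf.1.add_smul_sub_mem hx hz ⟨ht₀.le, ht₁⟩
  have hconv : f (x + t • (z - x)) ≤ (1 - t) * f x + t * f z := by
    rw [hseg]
    exact hf.2 hx hz (by linarith) ht₀.le (by ring)
  have hquad : B (x + t • (z - x) - x₀) (x + t • (z - x) - x₀)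
      = B (x - x₀) (x - x₀) + 2 * t * B (z - x) (x - x₀) + t ^ 2 * B (z - x) (z - x) := by
    rw [show x + t • (z - x) - x₀ = (x - x₀) + t • (z - x) by abel]
    simp only [map_add, map_smul, LinearMap.add_apply, LinearMap.smul_apply, smul_eq_mul,
      hB.eq (x - x₀) (z - x)]
    ring
  have hle := isMinOn_iff.mp hmin _ hmem
  rw [hquad] at hle
  have : 0 ≤ t * (f z - f x + B (z - x) (x - x₀) + t * (B (z - x) (z - x) / 2)) := by
    nlinarith
  exact nonneg_of_mul_nonneg_right this ht₀

section saddle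

variable {n m : ℕ} {θ1 : (Fin n → ℝ) → ℝ} {θ2 : (Fin m → ℝ) → ℝ} {A : Matrix (Fin m) (Fin n) ℝ}

lemma convexOn_Phi_left {s : Set (Fin n → ℝ)} (hθ1 : ConvexOn ℝ s θ1) (y : Fin m → ℝ) :
    ConvexOn ℝ s fun z => Phi θ1 θ2 A z y := by
  have hL : ConcaveOn ℝ s fun z => y ⬝ᵥ (A *ᵥ z) :=
    ((dotProductBilin ℝ ℝ y).comp A.mulVecLin).concaveOn hθ1.1
  exact (hθ1.sub hL).add_const (-θ2 y)

lemma concaveOn_Phi_right {s : Set (Fin m → ℝ)} (hθ2 : ConvexOn ℝ s θ2) (x : Fin n → ℝ) :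
    ConcaveOn ℝ s fun w => Phi θ1 θ2 A x w := by
  have hL : ConvexOn ℝ s fun w => w ⬝ᵥ (A *ᵥ x) :=
    ((dotProductBilin ℝ ℝ).flip (A *ᵥ x)).convexOn hθ2.1
  exact ((concaveOn_const (θ1 x) hθ2.1).sub hL).sub hθ2

lemma NPDHG1.isMinOn_primal {X : Set (Fin n → ℝ)} {Y : Set (Fin m → ℝ)} {r : ℝ}
    {Q : Matrix (Fin n) (Fin n) ℝ} {x : ℕ → Fin n → ℝ} {y : ℕ → Fin m → ℝ}
    (h : NPDHG1 θ1 θ2 X Y A r Q x y) (k : ℕ) :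
    IsMinOn (fun z => Phi θ1 θ2 A z (y k)
      + (r • (Aᵀ * A) + Q).toBilin' (z - x k) (z - x k) / 2) X (x (k + 1)) :=
  isMinOn_iff.mpr fun z hz => by
    simp only [Matrix.toBilin'_apply']
    linarith [(h.1 k).2 z hz]

lemma NPDHG1.isMinOn_dual {X : Set (Fin n → ℝ)} {Y : Set (Fin m → ℝ)} {r : ℝ}
    {Q : Matrix (Fin n) (Fin n) ℝ} {x : ℕ → Fin n → ℝ} {y : ℕ → Fin m → ℝ}
    (h : NPDHG1 θ1 θ2 X Y A r Q x y) (k : ℕ) :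
    IsMinOn (fun w => -Phi θ1 θ2 A ((2 : ℝ) • x (k + 1) - x k) w
      + (r⁻¹ • dotProductBilin ℝ ℝ) (w - y k) (w - y k) / 2) Y (y (k + 1)) :=
  isMinOn_iff.mpr fun w hw => by
    have hscale (v : Fin m → ℝ) : 1 / (2 * r) * (v ⬝ᵥ v) = r⁻¹ * (v ⬝ᵥ v) / 2 := by ring
    simp only [LinearMap.smul_apply, dotProductBilin_apply_apply, smul_eq_mul]
    linarith [(h.2 k).2 w hw, hscale (w - y k), hscale (y (k + 1) - y k)]

lemma saddle_gap_sub_Hbil (Q : Matrix (Fin n) (Fin n) ℝ) (r : ℝ)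
    (u : (Fin n → ℝ) × (Fin m → ℝ)) (xk p : Fin n → ℝ) (yk q : Fin m → ℝ) :
    (θ1 u.1 + θ2 u.2) - (θ1 p + θ2 q) + pdot (u - (p, q)) (Mhat A u)
        - Hbil A Q r (u - (p, q)) ((xk, yk) - (p, q))
      = (Phi θ1 θ2 A u.1 yk - Phi θ1 θ2 A p yk
          + (u.1 - p) ⬝ᵥ ((r • (Aᵀ * A) + Q) *ᵥ (p - xk)))
        + (-Phi θ1 θ2 A ((2 : ℝ) • p - xk) u.2 - -Phi θ1 θ2 A ((2 : ℝ) • p - xk) q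
          + r⁻¹ * ((u.2 - q) ⬝ᵥ (q - yk))) := by
  simp only [Phi, pdot, Mhat, Hbil, Prod.fst_sub, Prod.snd_sub, dotProduct_transpose_mulVec,
    mulVec_sub, mulVec_smul, dotProduct_sub, sub_dotProduct, dotProduct_neg,
    dotProduct_smul, smul_eq_mul, one_div]
  ring

end saddle

theorem stmt_17_general (n m : ℕ) (θ1 : (Fin n → ℝ) → ℝ) (θ2 : (Fin m → ℝ) → ℝ)
    (hθ1 : ConvexOn ℝ Set.univ θ1) (hθ2 : ConvexOn ℝ Set.univ θ2)
    (X : Set (Fin n → ℝ)) (hXconvex : Convex ℝ X)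
    (Y : Set (Fin m → ℝ)) (hYconvex : Convex ℝ Y)
    (A : Matrix (Fin m) (Fin n) ℝ) (r : ℝ)
    (Q : Matrix (Fin n) (Fin n) ℝ) (hQ : Q.PosDef)
    (x : ℕ → Fin n → ℝ) (y : ℕ → Fin m → ℝ) (halg : NPDHG1 θ1 θ2 X Y A r Q x y) :
    ∀ k : ℕ, (x (k + 1) ∈ X ∧ y (k + 1) ∈ Y) ∧
      ∀ u : (Fin n → ℝ) × (Fin m → ℝ), u.1 ∈ X → u.2 ∈ Y →
        (θ1 u.1 + θ2 u.2) - (θ1 (x (k + 1)) + θ2 (y (k + 1)))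
            + pdot (u - (x (k + 1), y (k + 1))) (Mhat A u) ≥
          Hbil A Q r (u - (x (k + 1), y (k + 1))) ((x k, y k) - (x (k + 1), y (k + 1))) := by
  intro k
  refine ⟨⟨(halg.1 k).1, (halg.2 k).1⟩, fun u hu₁ hu₂ => ?_⟩
  have hG : (r • (Aᵀ * A) + Q).IsSymm :=
    (IsSymm.smul (by simp [IsSymm, transpose_mul]) r).add (isHermitian_iff_isSymm.mp hQ.1)
  have hprimal :=
    (convexOn_Phi_left (θ2 := θ2) (A := A) (hθ1.subset (Set.subset_univ X) hXconvex) (y k)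
      ).nonneg_of_isMinOn_add_bilin (isSymm_toBilin'_iff_isSymm.mpr hG) (halg.1 k).1
        (halg.isMinOn_primal k) hu₁
  have hdual :=
    (concaveOn_Phi_right (θ1 := θ1) (A := A) (hθ2.subset (Set.subset_univ Y) hYconvex) _
      ).neg.nonneg_of_isMinOn_add_bilin (B := r⁻¹ • dotProductBilin ℝ ℝ)
        ⟨fun v w => by simp [dotProduct_comm v w]⟩ (halg.2 k).1 (halg.isMinOn_dual k) hu₂
  simp only [toBilin'_apply', LinearMap.smul_apply, dotProductBilin_apply_apply, smul_eq_mul,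
    Pi.neg_apply] at hprimal hdual
  rw [ge_iff_le, ← sub_nonneg, saddle_gap_sub_Hbil]
  exact add_nonneg hprimal hdual

/-- Lemma 4.1, inequality (26). -/
theorem stmt_17 (n m : ℕ) (θ1 : (Fin n → ℝ) → ℝ) (θ2 : (Fin m → ℝ) → ℝ)
    (hθ1 : ConvexOn ℝ Set.univ θ1) (hθ2 : ConvexOn ℝ Set.univ θ2)
    (X : Set (Fin n → ℝ)) (hXne : X.Nonempty) (hXclosed : IsClosed X) (hXconvex : Convex ℝ X)
    (Y : Set (Fin m → ℝ)) (hYne : Y.Nonempty) (hYclosed : IsClosed Y) (hYconvex : Convex ℝ Y)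
    (A : Matrix (Fin m) (Fin n) ℝ) (r : ℝ) (hr : 0 < r)
    (Q : Matrix (Fin n) (Fin n) ℝ) (hQ : Q.PosDef)
    (x : ℕ → Fin n → ℝ) (y : ℕ → Fin m → ℝ) (halg : NPDHG1 θ1 θ2 X Y A r Q x y) :
    ∀ k : ℕ, (x (k + 1) ∈ X ∧ y (k + 1) ∈ Y) ∧
      ∀ u : (Fin n → ℝ) × (Fin m → ℝ), u.1 ∈ X → u.2 ∈ Y →
        (θ1 u.1 + θ2 u.2) - (θ1 (x (k + 1)) + θ2 (y (k + 1)))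
            + pdot (u - (x (k + 1), y (k + 1))) (Mhat A u) ≥
          Hbil A Q r (u - (x (k + 1), y (k + 1))) ((x k, y k) - (x (k + 1), y (k + 1))) :=
  stmt_17_general n m θ1 θ2 hθ1 hθ2 X hXconvex Y hYconvex A r Q hQ x y halg
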